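/- Let g and g' be metric fields defined on a neighborhood of a point x₀ ∈ ℝ⁴, each satisfying the wave gauge condition h^{αβ} Γ^λ_{αβ} = 0 (for all λ) throughout that neighborhood. If g(x₀) = g'(x₀) and all first-order partial derivatives of the components of g and g' agree at x₀, then for all α, β: 2 R_{αβ}(x₀) + h^{μν}(x₀) ∂_μ∂_ν g_{αβ}(x₀) = 2 R'_{αβ}(x₀) + h'^{μν}(x₀) ∂_μ∂_ν g'_{αβ}(x₀). In other words, in wave gauge the combination 2 R_{αβ} + □̃_g g_{αβ} (with □̃_g u := h^{μν} ∂_μ∂_ν u the reduced wave operator) contains no second derivatives of the metric: it depends at each point only on the values of g and of its first derivatives there. -/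

import Mathlib

noncomputable section

open scoped BigOperators
open Real

/-- Points of `ℝ⁴`. -/
abbrev Pt : Type := Fin 4 → ℝ

/-- A metric field: a map from points to 4×4 real matrices. -/
abbrev Met : Type := Pt → Matrix (Fin 4) (Fin 4) ℝ

/-- Partial derivative `∂_α u` of a scalar function on `ℝ⁴`. -/
noncomputable def pd (α : Fin 4) (u : Pt → ℝ) (x : Pt) : ℝ :=
  fderiv ℝ u x (Pi.single α 1)

/-- The pointwise inverse metric `h = g⁻¹`. -/
noncomputable def ginv (g : Met) (x : Pt) : Matrix (Fin 4) (Fin 4) ℝ := (g x)⁻¹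

/-- `g` is a metric field on `Ω`: smooth, symmetric and invertible there. -/
def IsMetricOn (g : Met) (Ω : Set Pt) : Prop :=
  (∀ α β : Fin 4, ContDiffOn ℝ (⊤ : ℕ∞) (fun x => g x α β) Ω) ∧
  (∀ x ∈ Ω, (g x).IsSymm) ∧
  (∀ x ∈ Ω, IsUnit (g x).det)

/-- Christoffel symbols `Γ^λ_{αβ}`. -/
noncomputable def Chr (g : Met) (lam α β : Fin 4) (x : Pt) : ℝ :=
  (1/2) * ∑ μ : Fin 4, ginv g x lam μ *
    (pd α (fun y => g y β μ) x + pd β (fun y => g y α μ) x - pd μ (fun y => g y α β) x)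

/-- Ricci curvature `R_{αβ} = ∂_λ Γ^λ_{αβ} − ∂_α Γ^λ_{βλ} + Γ^λ_{αβ} Γ^δ_{λδ} − Γ^λ_{αδ} Γ^δ_{βλ}`. -/
noncomputable def Ric (g : Met) (α β : Fin 4) (x : Pt) : ℝ :=
  (∑ lam : Fin 4, pd lam (Chr g lam α β) x)
  - (∑ lam : Fin 4, pd α (Chr g lam β lam) x)
  + (∑ lam : Fin 4, ∑ δ : Fin 4, Chr g lam α β x * Chr g δ lam δ x)
  - (∑ lam : Fin 4, ∑ δ : Fin 4, Chr g lam α δ x * Chr g δ β lam x)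

/-- Scalar curvature `R = h^{αβ} R_{αβ}`. -/
noncomputable def Scal (g : Met) (x : Pt) : ℝ :=
  ∑ α : Fin 4, ∑ β : Fin 4, ginv g x α β * Ric g α β x

/-- Covariant Hessian of a scalar: `∇_α∇_β u = ∂_α∂_β u − Γ^λ_{αβ} ∂_λ u`. -/
noncomputable def covHess (g : Met) (u : Pt → ℝ) (α β : Fin 4) (x : Pt) : ℝ :=
  pd α (pd β u) x - ∑ lam : Fin 4, Chr g lam α β x * pd lam u x

/-- Geometric wave operator `□_g u = h^{αβ} ∇_α∇_β u`. -/
noncomputable def boxg (g : Met) (u : Pt → ℝ) (x : Pt) : ℝ :=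
  ∑ α : Fin 4, ∑ β : Fin 4, ginv g x α β * covHess g u α β x

section Aux

lemma pd_congr {u v : Pt → ℝ} {x : Pt} (h : u =ᶠ[nhds x] v) (μ : Fin 4) :
    pd μ u x = pd μ v x := by
  unfold pd; rw [Filter.EventuallyEq.fderiv_eq h]

lemma pd_const (μ : Fin 4) (x : Pt) (c : ℝ) : pd μ (fun _ => c) x = 0 := by
  simp [pd]

lemma pd_add {u v : Pt → ℝ} {x : Pt} (hu : DifferentiableAt ℝ u x)
    (hv : DifferentiableAt ℝ v x) (μ : Fin 4) :
    pd μ (fun y => u y + v y) x = pd μ u x + pd μ v x := by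
  unfold pd; rw [fderiv_fun_add hu hv]; simp

lemma pd_sub {u v : Pt → ℝ} {x : Pt} (hu : DifferentiableAt ℝ u x)
    (hv : DifferentiableAt ℝ v x) (μ : Fin 4) :
    pd μ (fun y => u y - v y) x = pd μ u x - pd μ v x := by
  unfold pd; rw [fderiv_fun_sub hu hv]; simp

lemma pd_mul {u v : Pt → ℝ} {x : Pt} (hu : DifferentiableAt ℝ u x)
    (hv : DifferentiableAt ℝ v x) (μ : Fin 4) :
    pd μ (fun y => u y * v y) x = pd μ u x * v x + u x * pd μ v x := by
  unfold pd; rw [fderiv_fun_mul hu hv]; simp; ring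

lemma pd_const_mul {u : Pt → ℝ} {x : Pt} (hu : DifferentiableAt ℝ u x) (c : ℝ) (μ : Fin 4) :
    pd μ (fun y => c * u y) x = c * pd μ u x := by
  unfold pd; rw [fderiv_const_mul hu]; simp

lemma pd_sum {ι : Type*} {s : Finset ι} {f : ι → Pt → ℝ} {x : Pt}
    (h : ∀ i ∈ s, DifferentiableAt ℝ (f i) x) (μ : Fin 4) :
    pd μ (fun y => ∑ i ∈ s, f i y) x = ∑ i ∈ s, pd μ (f i) x := by
  unfold pd; rw [fderiv_fun_sum h]; simp

lemma contDiffAt_pd {u : Pt → ℝ} {x : Pt} (h : ContDiffAt ℝ (⊤ : ℕ∞) u x) (μ : Fin 4) :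
    ContDiffAt ℝ (⊤ : ℕ∞) (pd μ u) x := by
  have h1 : ContDiffAt ℝ (⊤ : ℕ∞) (fderiv ℝ u) x := h.fderiv_right (by simp)
  exact h1.clm_apply contDiffAt_const

lemma pd_comm {u : Pt → ℝ} {x : Pt} (h : ContDiffAt ℝ (⊤ : ℕ∞) u x) (μ ν : Fin 4) :
    pd μ (pd ν u) x = pd ν (pd μ u) x := by
  have hd : DifferentiableAt ℝ (fderiv ℝ u) x :=
    (h.fderiv_right (m := ((⊤ : ℕ∞) : WithTop ℕ∞)) (by simp)).differentiableAt (by simp)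
  have hsymm := h.isSymmSndFDerivAt (by rw [minSmoothness_of_isRCLikeNormedField]; exact WithTop.coe_le_coe.mpr (le_top : (2:ℕ∞) ≤ ⊤))
  have key : ∀ a b : Fin 4, pd a (pd b u) x
      = fderiv ℝ (fderiv ℝ u) x (Pi.single a 1) (Pi.single b 1) := by
    intro a b
    unfold pd
    rw [fderiv_clm_apply hd (differentiableAt_const _)]
    simp
  rw [key, key]
  exact hsymm.eq _ _

lemma contDiffAt_det {M : Pt → Matrix (Fin 4) (Fin 4) ℝ} {x : Pt}
    (h : ∀ i j, ContDiffAt ℝ (⊤ : ℕ∞) (fun y => M y i j) x) :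
    ContDiffAt ℝ (⊤ : ℕ∞) (fun y => (M y).det) x := by
  simp only [Matrix.det_apply']
  apply ContDiffAt.sum
  intro σ _
  refine ContDiffAt.mul contDiffAt_const ?_
  simp only [Fin.prod_univ_four]
  exact (((h _ _).mul (h _ _)).mul (h _ _)).mul (h _ _)

lemma contDiffAt_adjugate {M : Pt → Matrix (Fin 4) (Fin 4) ℝ} {x : Pt}
    (h : ∀ i j, ContDiffAt ℝ (⊤ : ℕ∞) (fun y => M y i j) x) (a b : Fin 4) :
    ContDiffAt ℝ (⊤ : ℕ∞) (fun y => (M y).adjugate a b) x := by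
  simp only [Matrix.adjugate_apply]
  apply contDiffAt_det
  intro i j
  by_cases hib : i = b
  · subst hib
    simp only [Matrix.updateRow_self]
    exact contDiffAt_const
  · simp only [Matrix.updateRow_ne hib]
    exact h i j

end Aux

section Met2
variable {Ω : Set Pt} {g : Met} {x : Pt}

lemma entry_contDiffAt (hΩ : IsOpen Ω) (hg : IsMetricOn g Ω) (hx : x ∈ Ω) (a b : Fin 4) :
    ContDiffAt ℝ (⊤ : ℕ∞) (fun y => g y a b) x :=
  (hg.1 a b).contDiffAt (hΩ.mem_nhds hx)

lemma ginv_entry (g : Met) (y : Pt) (a b : Fin 4) :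
    ginv g y a b = ((g y).det)⁻¹ * (g y).adjugate a b := by
  rw [ginv, Matrix.inv_def]
  simp [Ring.inverse_eq_inv', Matrix.smul_apply, smul_eq_mul]

lemma ginv_contDiffAt (hΩ : IsOpen Ω) (hg : IsMetricOn g Ω) (hx : x ∈ Ω) (a b : Fin 4) :
    ContDiffAt ℝ (⊤ : ℕ∞) (fun y => ginv g y a b) x := by
  simp only [ginv_entry]
  have hdet : ContDiffAt ℝ (⊤ : ℕ∞) (fun y => (g y).det) x := contDiffAt_det (entry_contDiffAt hΩ hg hx)
  have hne : (g x).det ≠ 0 := (hg.2.2 x hx).ne_zero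
  exact (hdet.inv hne).mul (contDiffAt_adjugate (entry_contDiffAt hΩ hg hx) a b)

lemma ginv_mul_eq (hg : IsMetricOn g Ω) (hx : x ∈ Ω) (a b : Fin 4) :
    ∑ c, ginv g x a c * g x c b = if a = b then 1 else 0 := by
  have h := Matrix.nonsing_inv_mul (g x) (hg.2.2 x hx)
  have h2 := congrFun (congrFun h a) b
  simpa [Matrix.mul_apply, ginv, Matrix.one_apply] using h2

lemma mul_ginv_eq (hg : IsMetricOn g Ω) (hx : x ∈ Ω) (a b : Fin 4) :
    ∑ c, g x a c * ginv g x c b = if a = b then 1 else 0 := by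
  have h := Matrix.mul_nonsing_inv (g x) (hg.2.2 x hx)
  have h2 := congrFun (congrFun h a) b
  simpa [Matrix.mul_apply, ginv, Matrix.one_apply] using h2

lemma ginv_symm (hg : IsMetricOn g Ω) (hx : x ∈ Ω) (a b : Fin 4) :
    ginv g x a b = ginv g x b a := by
  have hs : (g x).transpose = g x := hg.2.1 x hx
  have ht : (ginv g x).transpose = ginv g x := by
    rw [ginv, Matrix.transpose_nonsing_inv, hs]
  have := congrFun (congrFun ht a) b
  rw [Matrix.transpose_apply] at this
  exact this.symm

lemma entry_symm (hg : IsMetricOn g Ω) (hx : x ∈ Ω) (a b : Fin 4) :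
    g x a b = g x b a := by
  have := congrFun (congrFun (hg.2.1 x hx) a) b
  rw [Matrix.transpose_apply] at this
  exact this.symm

lemma pd_entry_diff (hΩ : IsOpen Ω) (hg : IsMetricOn g Ω) (hx : x ∈ Ω) (ν a b : Fin 4) :
    DifferentiableAt ℝ (pd ν fun y => g y a b) x :=
  (contDiffAt_pd (entry_contDiffAt hΩ hg hx a b) ν).differentiableAt (by simp)

lemma chr_diff (hΩ : IsOpen Ω) (hg : IsMetricOn g Ω) (hx : x ∈ Ω) (lam a b : Fin 4) :
    DifferentiableAt ℝ (Chr g lam a b) x := by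
  have hC : Chr g lam a b = fun z => (1/2) * ∑ ρ : Fin 4, ginv g z lam ρ *
      (pd a (fun y => g y b ρ) z + pd b (fun y => g y a ρ) z - pd ρ (fun y => g y a b) z) := rfl
  rw [hC]
  refine DifferentiableAt.const_mul ?_ _
  refine DifferentiableAt.fun_sum fun ρ _ => ?_
  exact ((ginv_contDiffAt hΩ hg hx lam ρ).differentiableAt (by simp)).mul
    (((pd_entry_diff hΩ hg hx a b ρ).add (pd_entry_diff hΩ hg hx b a ρ)).sub
      (pd_entry_diff hΩ hg hx ρ a b))

end Met2

section Met3
variable {Ω : Set Pt} {g : Met} {x : Pt}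

lemma pd_pd_entry_symm (hΩ : IsOpen Ω) (hg : IsMetricOn g Ω) (hx : x ∈ Ω) (μ ν a b : Fin 4) :
    pd μ (pd ν (fun y => g y a b)) x = pd μ (pd ν (fun y => g y b a)) x := by
  refine pd_congr ?_ μ
  filter_upwards [hΩ.mem_nhds hx] with z hz
  refine pd_congr ?_ ν
  filter_upwards [hΩ.mem_nhds hz] with w hw
  exact entry_symm hg hw a b

lemma pd_ginv (hΩ : IsOpen Ω) (hg : IsMetricOn g Ω) (hx : x ∈ Ω) (μ a b : Fin 4) :
    pd μ (fun y => ginv g y a b) x =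
      -∑ d : Fin 4, (∑ c : Fin 4, ginv g x a c * pd μ (fun y => g y c d) x) * ginv g x d b := by
  have hgid : ∀ c d, DifferentiableAt ℝ (fun y => ginv g y c d) x := fun c d =>
    (ginv_contDiffAt hΩ hg hx c d).differentiableAt (by simp)
  have hed : ∀ c d, DifferentiableAt ℝ (fun y => g y c d) x := fun c d =>
    (entry_contDiffAt hΩ hg hx c d).differentiableAt (by simp)
  have key : ∀ e : Fin 4, ∑ c : Fin 4, (pd μ (fun y => ginv g y a c) x * g x c e
      + ginv g x a c * pd μ (fun y => g y c e) x) = 0 := by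
    intro e
    have hev : (fun y => ∑ c : Fin 4, ginv g y a c * g y c e) =ᶠ[nhds x]
        (fun _ => if a = e then (1:ℝ) else 0) := by
      filter_upwards [hΩ.mem_nhds hx] with y hy
      exact ginv_mul_eq hg hy a e
    have h0' : pd μ (fun y => ∑ c : Fin 4, ginv g y a c * g y c e) x = 0 := by
      rw [pd_congr hev, pd_const]
    rw [pd_sum (f := fun c y => ginv g y a c * g y c e)
      (fun c _ => (hgid a c).mul (hed c e)) μ] at h0'
    rw [← h0']
    exact Finset.sum_congr rfl fun c _ => (pd_mul (hgid a c) (hed c e) μ).symm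
  have key2 : ∀ e : Fin 4, ∑ c : Fin 4, pd μ (fun y => ginv g y a c) x * g x c e
      = -∑ c : Fin 4, ginv g x a c * pd μ (fun y => g y c e) x := by
    intro e
    have h := key e
    rw [Finset.sum_add_distrib] at h
    linarith
  calc pd μ (fun y => ginv g y a b) x
      = ∑ c : Fin 4, pd μ (fun y => ginv g y a c) x * (if c = b then (1:ℝ) else 0) := by
        simp [mul_ite, mul_one, mul_zero]
    _ = ∑ c : Fin 4, pd μ (fun y => ginv g y a c) x * (∑ d : Fin 4, g x c d * ginv g x d b) := by
        refine Finset.sum_congr rfl fun c _ => ?_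
        rw [mul_ginv_eq hg hx c b]
    _ = ∑ d : Fin 4, (∑ c : Fin 4, pd μ (fun y => ginv g y a c) x * g x c d) * ginv g x d b := by
        simp only [Fin.sum_univ_four]; ring
    _ = ∑ d : Fin 4, (-∑ c : Fin 4, ginv g x a c * pd μ (fun y => g y c d) x) * ginv g x d b := by
        refine Finset.sum_congr rfl fun d _ => ?_
        rw [key2 d]
    _ = -∑ d : Fin 4, (∑ c : Fin 4, ginv g x a c * pd μ (fun y => g y c d) x) * ginv g x d b := by
        simp only [Fin.sum_univ_four]; ring

lemma pd_chr (hΩ : IsOpen Ω) (hg : IsMetricOn g Ω) (hx : x ∈ Ω) (μ lam α β : Fin 4) :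
    pd μ (Chr g lam α β) x =
      (1/2) * ∑ ρ : Fin 4, (pd μ (fun y => ginv g y lam ρ) x *
          (pd α (fun y => g y β ρ) x + pd β (fun y => g y α ρ) x - pd ρ (fun y => g y α β) x)
        + ginv g x lam ρ *
          (pd μ (pd α (fun y => g y β ρ)) x + pd μ (pd β (fun y => g y α ρ)) x
            - pd μ (pd ρ (fun y => g y α β)) x)) := by
  have hgid : ∀ c d, DifferentiableAt ℝ (fun y => ginv g y c d) x := fun c d =>
    (ginv_contDiffAt hΩ hg hx c d).differentiableAt (by simp)
  have hpd : ∀ ν a b, DifferentiableAt ℝ (pd ν fun y => g y a b) x := pd_entry_diff hΩ hg hx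
  have hT : ∀ ρ, DifferentiableAt ℝ (fun z => pd α (fun y => g y β ρ) z
      + pd β (fun y => g y α ρ) z - pd ρ (fun y => g y α β) z) x := fun ρ =>
    ((hpd α β ρ).add (hpd β α ρ)).sub (hpd ρ α β)
  have hC : Chr g lam α β = fun z => (1/2) * ∑ ρ : Fin 4, ginv g z lam ρ *
      (pd α (fun y => g y β ρ) z + pd β (fun y => g y α ρ) z - pd ρ (fun y => g y α β) z) := rfl
  rw [hC]
  rw [pd_const_mul (DifferentiableAt.fun_sum fun ρ _ => (hgid lam ρ).fun_mul (hT ρ)) (1/2) μ]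
  congr 1
  rw [pd_sum (f := fun ρ z => ginv g z lam ρ * (pd α (fun y => g y β ρ) z
      + pd β (fun y => g y α ρ) z - pd ρ (fun y => g y α β) z))
    (fun ρ _ => (hgid lam ρ).mul (hT ρ)) μ]
  refine Finset.sum_congr rfl fun ρ _ => ?_
  rw [pd_mul (hgid lam ρ) (hT ρ) μ]
  congr 1
  rw [pd_sub ((hpd α β ρ).fun_add (hpd β α ρ)) (hpd ρ α β) μ,
    pd_add (hpd α β ρ) (hpd β α ρ) μ]

lemma gauge_pd (hΩ : IsOpen Ω) (hg : IsMetricOn g Ω) (hx : x ∈ Ω)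
    (hwave : ∀ z ∈ Ω, ∀ lam : Fin 4,
      ∑ a : Fin 4, ∑ b : Fin 4, ginv g z a b * Chr g lam a b z = 0) (μ lam : Fin 4) :
    ∑ a : Fin 4, ∑ b : Fin 4, (pd μ (fun y => ginv g y a b) x * Chr g lam a b x
      + ginv g x a b * pd μ (Chr g lam a b) x) = 0 := by
  have hgid : ∀ c d, DifferentiableAt ℝ (fun y => ginv g y c d) x := fun c d =>
    (ginv_contDiffAt hΩ hg hx c d).differentiableAt (by simp)
  have hcd : ∀ lam a b, DifferentiableAt ℝ (Chr g lam a b) x := chr_diff hΩ hg hx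
  have hev : (fun z => ∑ a : Fin 4, ∑ b : Fin 4, ginv g z a b * Chr g lam a b z)
      =ᶠ[nhds x] (fun _ => (0:ℝ)) := by
    filter_upwards [hΩ.mem_nhds hx] with z hz
    exact hwave z hz lam
  have h0' : pd μ (fun z => ∑ a : Fin 4, ∑ b : Fin 4, ginv g z a b * Chr g lam a b z) x = 0 := by
    rw [pd_congr hev, pd_const]
  rw [pd_sum (f := fun a z => ∑ b : Fin 4, ginv g z a b * Chr g lam a b z)
    (fun a _ => DifferentiableAt.fun_sum fun b _ => (hgid a b).mul (hcd lam a b)) μ] at h0'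
  rw [← h0']
  refine Finset.sum_congr rfl fun a _ => ?_
  rw [pd_sum (f := fun b z => ginv g z a b * Chr g lam a b z)
    (fun b _ => (hgid a b).mul (hcd lam a b)) μ]
  exact Finset.sum_congr rfl fun b _ => (pd_mul (hgid a b) (hcd lam a b) μ).symm

end Met3

section KeyAlg

set_option maxHeartbeats 1600000 in
lemma key_algebra (G H : Matrix (Fin 4) (Fin 4) ℝ) (E : Fin 4 → Fin 4 → Fin 4 → Fin 4 → ℝ)
    (hGH : ∀ c b : Fin 4, ∑ d : Fin 4, G c d * H d b = if c = b then (1:ℝ) else 0)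
    (hHs : ∀ a b : Fin 4, H a b = H b a)
    (hE1 : ∀ μ ν a b : Fin 4, E μ ν a b = E ν μ a b)
    (hE2 : ∀ μ ν a b : Fin 4, E μ ν a b = E μ ν b a)
    (hgauge : ∀ lam μ : Fin 4, ∑ a : Fin 4, ∑ b : Fin 4, H a b *
      ∑ ρ : Fin 4, H lam ρ * (E μ a b ρ + E μ b a ρ - E μ ρ a b) = 0)
    (α β : Fin 4) :
    2 * ((∑ lam : Fin 4, (1/2) * ∑ ρ : Fin 4,
            H lam ρ * (E lam α β ρ + E lam β α ρ - E lam ρ α β))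
       - (∑ lam : Fin 4, (1/2) * ∑ ρ : Fin 4,
            H lam ρ * (E α β lam ρ + E α lam β ρ - E α ρ β lam)))
     + ∑ μ : Fin 4, ∑ ν : Fin 4, H μ ν * E μ ν α β = 0 := by
  -- swap lemma for contractions with the symmetric matrix H
  have Hswap : ∀ f : Fin 4 → Fin 4 → ℝ,
      ∑ a : Fin 4, ∑ b : Fin 4, H a b * f a b = ∑ a : Fin 4, ∑ b : Fin 4, H a b * f b a := by
    intro f
    rw [Finset.sum_comm]
    refine Finset.sum_congr rfl fun a _ => Finset.sum_congr rfl fun b _ => ?_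
    rw [hHs a b]
  -- contracted gauge identity
  have KC0 : ∀ μ e : Fin 4,
      ∑ a : Fin 4, ∑ b : Fin 4, H a b * (E μ a b e + E μ b a e - E μ e a b) = 0 := by
    intro μ e
    calc ∑ a : Fin 4, ∑ b : Fin 4, H a b * (E μ a b e + E μ b a e - E μ e a b)
        = ∑ a : Fin 4, ∑ b : Fin 4, H a b * ∑ ρ : Fin 4,
            (if e = ρ then (1:ℝ) else 0) * (E μ a b ρ + E μ b a ρ - E μ ρ a b) := by
          refine Finset.sum_congr rfl fun a _ => Finset.sum_congr rfl fun b _ => ?_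
          congr 1
          simp [ite_mul, Finset.sum_ite_eq]
      _ = ∑ a : Fin 4, ∑ b : Fin 4, H a b * ∑ ρ : Fin 4,
            (∑ lam : Fin 4, G e lam * H lam ρ) * (E μ a b ρ + E μ b a ρ - E μ ρ a b) := by
          simp only [hGH]
      _ = ∑ lam : Fin 4, G e lam * (∑ a : Fin 4, ∑ b : Fin 4, H a b *
            ∑ ρ : Fin 4, H lam ρ * (E μ a b ρ + E μ b a ρ - E μ ρ a b)) := by
          simp only [Fin.sum_univ_four]; ring
      _ = 0 := by
          simp only [hgauge, mul_zero, Finset.sum_const_zero]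
  -- KC : 2 * ∑ H E μ a b e = ∑ H E μ e a b
  have KC : ∀ μ e : Fin 4,
      2 * (∑ a : Fin 4, ∑ b : Fin 4, H a b * E μ a b e)
        = ∑ a : Fin 4, ∑ b : Fin 4, H a b * E μ e a b := by
    intro μ e
    have h1 := KC0 μ e
    have h2 : ∑ a : Fin 4, ∑ b : Fin 4, H a b * E μ b a e
        = ∑ a : Fin 4, ∑ b : Fin 4, H a b * E μ a b e :=
      Hswap fun a b => E μ b a e
    simp only [Fin.sum_univ_four] at h1 h2 ⊢
    linarith
  -- rewrite the three main blocks
  have hA1 : ∑ lam : Fin 4, ∑ ρ : Fin 4, H lam ρ * E lam α β ρ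
      = ∑ a : Fin 4, ∑ b : Fin 4, H a b * E α a b β := by
    refine Finset.sum_congr rfl fun lam _ => Finset.sum_congr rfl fun ρ _ => ?_
    rw [hE1 lam α β ρ, hE2 α lam β ρ]
  have hA2 : ∑ lam : Fin 4, ∑ ρ : Fin 4, H lam ρ * E lam β α ρ
      = ∑ a : Fin 4, ∑ b : Fin 4, H a b * E β a b α := by
    refine Finset.sum_congr rfl fun lam _ => Finset.sum_congr rfl fun ρ _ => ?_
    rw [hE1 lam β α ρ, hE2 β lam α ρ]
  have hB23 : ∑ lam : Fin 4, ∑ ρ : Fin 4, H lam ρ * E α ρ β lam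
      = ∑ lam : Fin 4, ∑ ρ : Fin 4, H lam ρ * E α lam β ρ :=
    (Hswap fun a b => E α b β a)
  have hKCα := KC α β
  have hKCβ := KC β α
  have hEβα : ∑ a : Fin 4, ∑ b : Fin 4, H a b * E β α a b
      = ∑ a : Fin 4, ∑ b : Fin 4, H a b * E α β a b := by
    refine Finset.sum_congr rfl fun a _ => Finset.sum_congr rfl fun b _ => ?_
    rw [hE1 β α a b]
  -- B1 vs ∑ H E α β a b : they are identical up to renaming
  simp only [Fin.sum_univ_four] at hA1 hA2 hB23 hKCα hKCβ hEβα ⊢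
  linarith
end KeyAlg

set_option maxHeartbeats 1600000 in
/-- If two metric fields `g, g'` on a neighborhood of `x₀` both satisfy
the wave gauge condition `h^{αβ} Γ^λ_{αβ} = 0` throughout that neighborhood, and they
agree together with all their first derivatives at `x₀`, then the combination
`2 R_{αβ} + □̃_g g_{αβ}` (with `□̃_g u = h^{μν} ∂_μ∂_ν u`) takes the same value at `x₀` for
both metrics: in wave gauge this combination contains no second derivatives of the metric. -/
theorem wave_gauge_reduced_ricci_first_order
    (Ω : Set Pt) (hΩ : IsOpen Ω) (x₀ : Pt) (hx₀ : x₀ ∈ Ω)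
    (g g' : Met) (hg : IsMetricOn g Ω) (hg' : IsMetricOn g' Ω)
    (hwave : ∀ x ∈ Ω, ∀ lam : Fin 4,
      ∑ α : Fin 4, ∑ β : Fin 4, ginv g x α β * Chr g lam α β x = 0)
    (hwave' : ∀ x ∈ Ω, ∀ lam : Fin 4,
      ∑ α : Fin 4, ∑ β : Fin 4, ginv g' x α β * Chr g' lam α β x = 0)
    (h0 : g x₀ = g' x₀)
    (h1 : ∀ α β μ : Fin 4,
      pd μ (fun y => g y α β) x₀ = pd μ (fun y => g' y α β) x₀) :
    ∀ α β : Fin 4,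
      2 * Ric g α β x₀
        + ∑ μ : Fin 4, ∑ ν : Fin 4, ginv g x₀ μ ν * pd μ (pd ν (fun y => g y α β)) x₀
      = 2 * Ric g' α β x₀
        + ∑ μ : Fin 4, ∑ ν : Fin 4, ginv g' x₀ μ ν * pd μ (pd ν (fun y => g' y α β)) x₀ := by
  intro α β
  have hHeq : ginv g' x₀ = ginv g x₀ := by rw [ginv, ginv, h0]
  set E : Fin 4 → Fin 4 → Fin 4 → Fin 4 → ℝ := fun μ ν a b =>
    pd μ (pd ν (fun y => g y a b)) x₀ - pd μ (pd ν (fun y => g' y a b)) x₀ with hE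
  have F2 : ∀ μ a b : Fin 4,
      pd μ (fun y => ginv g' y a b) x₀ = pd μ (fun y => ginv g y a b) x₀ := by
    intro μ a b
    rw [pd_ginv hΩ hg' hx₀ μ a b, pd_ginv hΩ hg hx₀ μ a b, hHeq]
    simp only [← h1]
  have F1 : ∀ lam a b : Fin 4, Chr g' lam a b x₀ = Chr g lam a b x₀ := by
    intro lam a b
    simp only [Chr, hHeq, ← h1]
  have F3 : ∀ μ lam a b : Fin 4,
      pd μ (Chr g lam a b) x₀ - pd μ (Chr g' lam a b) x₀
        = (1/2) * ∑ ρ : Fin 4, ginv g x₀ lam ρ * (E μ a b ρ + E μ b a ρ - E μ ρ a b) := by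
    intro μ lam a b
    rw [pd_chr hΩ hg hx₀ μ lam a b, pd_chr hΩ hg' hx₀ μ lam a b]
    simp only [hHeq, F2, ← h1, hE]
    simp only [Fin.sum_univ_four]
    ring
  have hE1 : ∀ μ ν a b : Fin 4, E μ ν a b = E ν μ a b := by
    intro μ ν a b
    simp only [hE]
    rw [pd_comm (entry_contDiffAt hΩ hg hx₀ a b) μ ν,
      pd_comm (entry_contDiffAt hΩ hg' hx₀ a b) μ ν]
  have hE2 : ∀ μ ν a b : Fin 4, E μ ν a b = E μ ν b a := by
    intro μ ν a b
    simp only [hE]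
    rw [pd_pd_entry_symm hΩ hg hx₀ μ ν a b, pd_pd_entry_symm hΩ hg' hx₀ μ ν a b]
  have hga : ∀ lam μ : Fin 4, ∑ a : Fin 4, ∑ b : Fin 4, ginv g x₀ a b *
      ∑ ρ : Fin 4, ginv g x₀ lam ρ * (E μ a b ρ + E μ b a ρ - E μ ρ a b) = 0 := by
    intro lam μ
    have hA := gauge_pd hΩ hg hx₀ hwave μ lam
    have hB := gauge_pd hΩ hg' hx₀ hwave' μ lam
    simp only [hHeq, F2, F1] at hB
    have hdiff : ∑ a : Fin 4, ∑ b : Fin 4, ginv g x₀ a b *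
        (pd μ (Chr g lam a b) x₀ - pd μ (Chr g' lam a b) x₀) = 0 := by
      simp only [Fin.sum_univ_four] at hA hB ⊢
      ring_nf at hA hB ⊢
      linarith [hA, hB]
    have hmid : ∑ a : Fin 4, ∑ b : Fin 4, ginv g x₀ a b *
        ((1/2) * ∑ ρ : Fin 4, ginv g x₀ lam ρ * (E μ a b ρ + E μ b a ρ - E μ ρ a b)) = 0 := by
      calc ∑ a : Fin 4, ∑ b : Fin 4, ginv g x₀ a b *
            ((1/2) * ∑ ρ : Fin 4, ginv g x₀ lam ρ * (E μ a b ρ + E μ b a ρ - E μ ρ a b))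
          = ∑ a : Fin 4, ∑ b : Fin 4, ginv g x₀ a b *
            (pd μ (Chr g lam a b) x₀ - pd μ (Chr g' lam a b) x₀) :=
            Finset.sum_congr rfl fun a _ => Finset.sum_congr rfl fun b _ => by
              rw [F3 μ lam a b]
        _ = 0 := hdiff
    have hsplit : ∑ a : Fin 4, ∑ b : Fin 4, ginv g x₀ a b *
        ∑ ρ : Fin 4, ginv g x₀ lam ρ * (E μ a b ρ + E μ b a ρ - E μ ρ a b)
        = 2 * ∑ a : Fin 4, ∑ b : Fin 4, ginv g x₀ a b *
        ((1/2) * ∑ ρ : Fin 4, ginv g x₀ lam ρ * (E μ a b ρ + E μ b a ρ - E μ ρ a b)) := by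
      simp only [Fin.sum_univ_four]; ring
    rw [hsplit, hmid, mul_zero]
  have hKey := key_algebra (g x₀) (ginv g x₀) E
    (fun c b => mul_ginv_eq hg hx₀ c b)
    (fun a b => ginv_symm hg hx₀ a b)
    hE1 hE2 hga α β
  have hS1 : (∑ lam : Fin 4, pd lam (Chr g lam α β) x₀)
      - (∑ lam : Fin 4, pd lam (Chr g' lam α β) x₀)
      = ∑ lam : Fin 4, (1/2) * ∑ ρ : Fin 4,
          ginv g x₀ lam ρ * (E lam α β ρ + E lam β α ρ - E lam ρ α β) := by
    rw [← Finset.sum_sub_distrib]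
    exact Finset.sum_congr rfl fun lam _ => F3 lam lam α β
  have hS2 : (∑ lam : Fin 4, pd α (Chr g lam β lam) x₀)
      - (∑ lam : Fin 4, pd α (Chr g' lam β lam) x₀)
      = ∑ lam : Fin 4, (1/2) * ∑ ρ : Fin 4,
          ginv g x₀ lam ρ * (E α β lam ρ + E α lam β ρ - E α ρ β lam) := by
    rw [← Finset.sum_sub_distrib]
    exact Finset.sum_congr rfl fun lam _ => F3 α lam β lam
  have hBox : (∑ μ : Fin 4, ∑ ν : Fin 4, ginv g x₀ μ ν * pd μ (pd ν (fun y => g y α β)) x₀)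
      - (∑ μ : Fin 4, ∑ ν : Fin 4, ginv g' x₀ μ ν * pd μ (pd ν (fun y => g' y α β)) x₀)
      = ∑ μ : Fin 4, ∑ ν : Fin 4, ginv g x₀ μ ν * E μ ν α β := by
    simp only [hHeq, hE]
    simp only [Fin.sum_univ_four]; ring
  have hQ1 : ∑ lam : Fin 4, ∑ δ : Fin 4, Chr g' lam α β x₀ * Chr g' δ lam δ x₀
      = ∑ lam : Fin 4, ∑ δ : Fin 4, Chr g lam α β x₀ * Chr g δ lam δ x₀ := by
    simp only [F1]
  have hQ2 : ∑ lam : Fin 4, ∑ δ : Fin 4, Chr g' lam α δ x₀ * Chr g' δ β lam x₀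
      = ∑ lam : Fin 4, ∑ δ : Fin 4, Chr g lam α δ x₀ * Chr g δ β lam x₀ := by
    simp only [F1]
  simp only [Ric]
  linarith [hKey, hS1, hS2, hBox, hQ1, hQ2]
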